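/- Fix a real number σ with 0 ≤ σ < 1. Then for every z > 0 and every k ∈ [−1,1] one has ψ(k,z)/F(z) + ξ(k,z)/F̄(z) > 0 and ψ(k,z)/F(z) − ξ(k,z)/F̄(z) > 0. -/

import Mathlib

noncomputable section

open Real

/-- `F(z) = ((3+σ)/2)·sinh(2z) − (1−σ)·z`. -/
def F (σ z : ℝ) : ℝ := ((3 + σ) / 2) * Real.sinh (2 * z) - (1 - σ) * z

/-- `F̄(z) = ((3+σ)/2)·sinh(2z) + (1−σ)·z`. -/
def Fbar (σ z : ℝ) : ℝ := ((3 + σ) / 2) * Real.sinh (2 * z) + (1 - σ) * z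

/-- `ψ(k,z)`. -/
def psi (σ k z : ℝ) : ℝ :=
  (2 + (1 - σ) * z) * Real.cosh (k * z) * Real.cosh z
    + (-(1 + σ) + (1 - σ) * z) * Real.cosh (k * z) * Real.sinh z
    - (1 - σ) * k * z * Real.sinh (k * z) * Real.cosh z
    - (1 - σ) * k * z * Real.sinh (k * z) * Real.sinh z

/-- `ξ(k,z)`. -/
def xi (σ k z : ℝ) : ℝ :=
  -(1 - σ) * k * z * Real.cosh (k * z) * Real.cosh z
    - (1 - σ) * k * z * Real.cosh (k * z) * Real.sinh z
    + (-(1 + σ) + (1 - σ) * z) * Real.sinh (k * z) * Real.cosh z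
    + (2 + (1 - σ) * z) * Real.sinh (k * z) * Real.sinh z

/-- `ζ(k,z)`. -/
def zeta (σ k z : ℝ) : ℝ :=
  (4 / (1 - σ) - (1 + σ) * z) * Real.cosh (k * z) * Real.cosh z
    + ((1 + σ) ^ 2 / (1 - σ) + 2 * z) * Real.cosh (k * z) * Real.sinh z
    - 2 * k * z * Real.sinh (k * z) * Real.cosh z
    + (1 + σ) * k * z * Real.sinh (k * z) * Real.sinh z

/-- `η(k,z)`. -/
def eta (σ k z : ℝ) : ℝ :=
  (1 + σ) * k * z * Real.cosh (k * z) * Real.cosh z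
    - 2 * k * z * Real.cosh (k * z) * Real.sinh z
    + ((1 + σ) ^ 2 / (1 - σ) + 2 * z) * Real.sinh (k * z) * Real.cosh z
    + (4 / (1 - σ) - (1 + σ) * z) * Real.sinh (k * z) * Real.sinh z

/-- `g(s,k,z)`. -/
def g (σ s k z : ℝ) : ℝ :=
  Real.cosh (s * z) *
      (zeta σ k z / F σ z + z * psi σ k z / F σ z - s * z * xi σ k z / Fbar σ z)
    + Real.sinh (s * z) *
      (eta σ k z / Fbar σ z + z * xi σ k z / Fbar σ z - s * z * psi σ k z / F σ z)

/-- `h(s,k,z) = (1+z·|k−s|)·exp(−z·|k−s|)`. -/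
def hfun (s k z : ℝ) : ℝ := (1 + z * |k - s|) * Real.exp (-(z * |k - s|))

/-- `φ(s,k,z) = exp(−z)·g(s,k,z) + h(s,k,z)`. -/
def phi (σ s k z : ℝ) : ℝ := Real.exp (-z) * g σ s k z + hfun s k z

/-!
Both `ψ ± ξ` have the closed form `(1-σ)(1/2 + (1∓k)z) e^{(1±k)z} + ((3+σ)/2) e^{-(1±k)z}`,
which is positive; in particular `ψ ≥ 0`. Since `0 < F ≤ F̄`, this gives
`ψ/F ± ξ/F̄ ≥ (ψ ± ξ)/F̄ > 0`.
-/

theorem div_add_div_pos_of_le {K : Type*} [Field K] [LinearOrder K] [IsStrictOrderedRing K]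
    {p x a b : K} (hp : 0 ≤ p) (ha : 0 < a) (hab : a ≤ b) (h : 0 < p + x) :
    0 < p / a + x / b :=
  calc 0 < (p + x) / b := div_pos h (ha.trans_le hab)
    _ = p / b + x / b := add_div p x b
    _ ≤ p / a + x / b := by gcongr

theorem F_pos {σ z : ℝ} (hσ : -1 < σ) (hz : 0 < z) : 0 < F σ z := by
  have : 2 * z < sinh (2 * z) := self_lt_sinh_iff.2 (by linarith)
  unfold F
  nlinarith

theorem F_le_Fbar {σ z : ℝ} (hσ : σ ≤ 1) (hz : 0 ≤ z) : F σ z ≤ Fbar σ z := by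
  unfold F Fbar
  nlinarith

theorem psi_neg (σ k z : ℝ) : psi σ (-k) z = psi σ k z := by
  simp only [psi, neg_mul, cosh_neg, sinh_neg]
  ring

theorem xi_neg (σ k z : ℝ) : xi σ (-k) z = -xi σ k z := by
  simp only [xi, neg_mul, cosh_neg, sinh_neg]
  ring

theorem psi_add_xi (σ k z : ℝ) :
    psi σ k z + xi σ k z =
      (1 - σ) * (1 / 2 + (1 - k) * z) * exp ((k + 1) * z)
        + (3 + σ) / 2 * exp (-((k + 1) * z)) := by
  rw [← cosh_sub_sinh, ← cosh_add_sinh, show (k + 1) * z = k * z + z by ring, cosh_add, sinh_add]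
  unfold psi xi
  ring

theorem psi_add_xi_pos {σ k z : ℝ} (hσ3 : 0 < 3 + σ) (hσ1 : σ ≤ 1) (hz : 0 ≤ z) (hk : k ≤ 1) :
    0 < psi σ k z + xi σ k z := by
  rw [psi_add_xi]
  have hlin : 0 < 1 / 2 + (1 - k) * z := by nlinarith
  exact add_pos_of_nonneg_of_pos
    (mul_nonneg (mul_nonneg (by linarith) hlin.le) (exp_pos _).le)
    (mul_pos (by linarith) (exp_pos _))

theorem psi_sub_xi_pos {σ k z : ℝ} (hσ3 : 0 < 3 + σ) (hσ1 : σ ≤ 1) (hz : 0 ≤ z) (hk : -1 ≤ k) :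
    0 < psi σ k z - xi σ k z := by
  simpa only [psi_neg, xi_neg, ← sub_eq_add_neg] using
    psi_add_xi_pos (k := -k) hσ3 hσ1 hz (by linarith)

/-- Lemma 4.3: for σ ∈ [0,1), z > 0 and k ∈ [−1,1],
ψ(k,z)/F(z) ± ξ(k,z)/F̄(z) > 0. -/
theorem psi_xi_quotient_pos (σ : ℝ) (hσ0 : 0 ≤ σ) (hσ1 : σ < 1) :
    ∀ z : ℝ, 0 < z → ∀ k ∈ Set.Icc (-1 : ℝ) 1,
      0 < psi σ k z / F σ z + xi σ k z / Fbar σ z ∧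
      0 < psi σ k z / F σ z - xi σ k z / Fbar σ z := by
  intro z hz k ⟨hk1, hk2⟩
  have hσ3 : 0 < 3 + σ := by linarith
  have hadd := psi_add_xi_pos hσ3 hσ1.le hz.le hk2
  have hsub := psi_sub_xi_pos hσ3 hσ1.le hz.le hk1
  have hpsi : 0 ≤ psi σ k z := by linarith
  have hF : 0 < F σ z := F_pos (by linarith) hz
  have hFle := F_le_Fbar hσ1.le hz.le
  refine ⟨div_add_div_pos_of_le hpsi hF hFle hadd, ?_⟩
  rw [sub_eq_add_neg, ← neg_div]
  exact div_add_div_pos_of_le hpsi hF hFle (by linarith)
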